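/- arXiv:2510.14412 — 3 statements merged into one kernel-verified Lean document; each statement's English description precedes it below -/
import Mathlib

section
/- Let α be a type, F : Set α → Set α monotone, N : ℕ, and t : ℕ → Set α a sequence with t 0 = ∅, t k ⊆ t (k+1) and t (k+1) ⊆ t k ∪ F (t k) for all k < N, and F (t N) ⊆ t N. Then t N is the least fixed point of F, i.e. F (t N) = t N and t N ⊆ s for every s with F s ⊆ s. (Correctness and order-independence of the chaotic one-atom-at-a-time derivation performed by function extendStratum of Algorithm 1: no matter in which order applicable axiom instances are chosen, upon termination the computed set is the unique least fixed point.) -/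
/-! Every stage of the chaotic iteration stays below every prefixed point `s` of `F`: by induction,
`t (k + 1) ≤ t k ⊔ F (t k) ≤ s ⊔ F s = s` by monotonicity. Applied to the prefixed point `t N`
itself and to `F (t N)` (a prefixed point again by monotonicity), this makes `t N` the least
prefixed point and a fixed point. -/

theorem le_of_map_le_of_le_sup_map {L : Type*} [SemilatticeSup L] [OrderBot L] {F : L → L}
    (hF : Monotone F) {N : ℕ} {t : ℕ → L} (h0 : t 0 = ⊥)
    (hstep : ∀ k < N, t (k + 1) ≤ t k ⊔ F (t k)) {s : L} (hs : F s ≤ s) :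
    ∀ k ≤ N, t k ≤ s := by
  intro k
  induction k with
  | zero => simp [h0]
  | succ k ih =>
    intro hk
    have htk : t k ≤ s := ih (by omega)
    exact (hstep k hk).trans (sup_le htk ((hF htk).trans hs))

theorem chaotic_iteration_computes_lfp_general
    {α : Type*} (F : Set α → Set α) (hF : Monotone F)
    (N : ℕ) (t : ℕ → Set α)
    (h0 : t 0 = ∅)
    (hstep : ∀ k < N, t (k + 1) ⊆ t k ∪ F (t k))
    (hterm : F (t N) ⊆ t N) :
    F (t N) = t N ∧ ∀ s : Set α, F s ⊆ s → t N ⊆ s := by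
  have hleast : ∀ s : Set α, F s ⊆ s → t N ⊆ s := fun s hs =>
    le_of_map_le_of_le_sup_map hF h0 hstep hs N le_rfl
  exact ⟨hterm.antisymm (hleast _ (hF hterm)), hleast⟩

theorem chaotic_iteration_computes_lfp
    {α : Type*} (F : Set α → Set α) (hF : Monotone F)
    (N : ℕ) (t : ℕ → Set α)
    (h0 : t 0 = ∅)
    (hincr : ∀ k < N, t k ⊆ t (k + 1))
    (hstep : ∀ k < N, t (k + 1) ⊆ t k ∪ F (t k))
    (hterm : F (t N) ⊆ t N) :
    F (t N) = t N ∧ ∀ s : Set α, F s ⊆ s → t N ⊆ s :=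
  chaotic_iteration_computes_lfp_general F hF N t h0 hstep hterm
end

section
/- (Semantic correctness of the axiom for ≺, equation (1).) For all a b : α: stage(a) < stage(b) if and only if there exists c : α with stage(a) ≤ stage(c), stage(c) ≤ f, and stage(c) + 1 = stage(b). That is, a is derived strictly before b exactly when a is derived before some atom c that is derived immediately before b. -/
/- The stage of an atom `a` under the staged fixed-point computation
(Algorithm 2): the least `l` with `a ∈ F^[l] ∅` if `a` belongs to the
fixed point `F^[f] ∅`, and `f + 1` otherwise. -/
open Classical in
noncomputable def stage {α : Type*} (F : Set α → Set α) (f : ℕ) (a : α) : ℕ :=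
  if a ∈ F^[f] (∅ : Set α) then sInf {l : ℕ | a ∈ F^[l] (∅ : Set α)} else f + 1

/-! The stages of the atoms occupy the interval `[1, f + 1]`, and every stage `1, …, f` is
attained because the chain `F^[l] ∅` grows strictly up to `f`. So if `stage a < stage b`, an
atom `c` of stage `stage b - 1` is the required witness; the converse is arithmetic. -/

section

variable {α : Type*} {F : Set α → Set α}

theorem monotone_iterate_empty (hF : Monotone F) : Monotone fun l => F^[l] (∅ : Set α) :=
  hF.monotone_iterate_of_le_map (Set.empty_subset _)

theorem one_le_stage (f : ℕ) (a : α) : 1 ≤ stage F f a := by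
  unfold stage
  split_ifs with ha
  · refine Nat.one_le_iff_ne_zero.mpr fun h0 => ?_
    rcases Nat.sInf_eq_zero.mp h0 with h | h
    · simp at h
    · exact (Set.eq_empty_iff_forall_notMem.mp h) f ha
  · omega

theorem stage_le_succ (f : ℕ) (a : α) : stage F f a ≤ f + 1 := by
  unfold stage
  split_ifs with ha
  · exact (Nat.sInf_le ha).trans f.le_succ
  · exact le_rfl

theorem stage_eq_succ_of_mem_of_notMem (hF : Monotone F) {f l : ℕ} (hl : l + 1 ≤ f) {c : α}
    (h₁ : c ∈ F^[l + 1] (∅ : Set α)) (h₂ : c ∉ F^[l] (∅ : Set α)) :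
    stage F f c = l + 1 := by
  rw [stage, if_pos (monotone_iterate_empty hF hl h₁)]
  exact (Nat.sInf_upward_closed_eq_succ_iff
    (fun _ _ hmn hm => monotone_iterate_empty hF hmn hm) l).mpr ⟨h₁, h₂⟩

theorem exists_stage_eq (hF : Monotone F) {f : ℕ}
    (hfmin : ∀ j : ℕ, F^[j + 1] ∅ = F^[j] ∅ → f ≤ j) {l : ℕ} (hl : 1 ≤ l) (hlf : l ≤ f) :
    ∃ c : α, stage F f c = l := by
  obtain ⟨k, rfl⟩ : ∃ k, l = k + 1 := ⟨l - 1, by omega⟩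
  have hne : F^[k + 1] (∅ : Set α) ≠ F^[k] ∅ := fun h => by have := hfmin k h; omega
  obtain ⟨c, hc₁, hc₂⟩ := Set.exists_of_ssubset
    ((monotone_iterate_empty hF k.le_succ).ssubset_of_ne hne.symm)
  exact ⟨c, stage_eq_succ_of_mem_of_notMem hF hlf hc₁ hc₂⟩

end

theorem lt_axiom_correct_general
    {α : Type*} (F : Set α → Set α) (hF : Monotone F)
    (f : ℕ)
    (hfmin : ∀ j : ℕ, F^[j + 1] ∅ = F^[j] ∅ → f ≤ j) :
    ∀ a b : α,
      stage F f a < stage F f b ↔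
        ∃ c : α, stage F f a ≤ stage F f c ∧ stage F f c ≤ f ∧
          stage F f c + 1 = stage F f b := by
  intro a b
  constructor
  · intro hab
    have ha := one_le_stage (F := F) f a
    have hb := stage_le_succ (F := F) f b
    obtain ⟨c, hc⟩ := exists_stage_eq hF hfmin (l := stage F f b - 1) (by omega) (by omega)
    exact ⟨c, by omega, by omega, by omega⟩
  · rintro ⟨c, hac, -, hcb⟩
    omega

theorem lt_axiom_correct
    {α : Type*} [Fintype α] (F : Set α → Set α) (hF : Monotone F)
    (f : ℕ) (hf : F^[f + 1] ∅ = F^[f] ∅)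
    (hfmin : ∀ j : ℕ, F^[j + 1] ∅ = F^[j] ∅ → f ≤ j) :
    ∀ a b : α,
      stage F f a < stage F f b ↔
        ∃ c : α, stage F f a ≤ stage F f c ∧ stage F f c ≤ f ∧
          stage F f c + 1 = stage F f b :=
  lt_axiom_correct_general F hF f hfmin
end

section
/- (Semantic correctness of the axiom for ◁, equation (5).) For all a b : α: stage(b) = stage(a) + 1 if and only if all three of the following hold: (i) a ∈ F {c : α | stage(c) < stage(a)}; (ii) b ∉ F {c : α | stage(c) < stage(a)}; and (iii) b ∈ F {c : α | stage(c) ≤ stage(a) ∧ stage(c) ≤ f}, or for every c : α, c ∈ F {c' : α | stage(c') ≤ stage(a) ∧ stage(c') ≤ f} implies c ∈ F {c' : α | stage(c') < stage(a)}. That is, a is derived immediately before b exactly when a is derivable from the atoms derived strictly before a, b is not derivable from those atoms, and either b is derivable from the atoms derived before a, or the fixed point is reached at a's stage. -/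
namespace Stage

variable {α : Type*} {F : Set α → Set α} {f : ℕ} {a : α}

theorem iterate_empty_mono (hF : Monotone F) : Monotone fun n => F^[n] (∅ : Set α) :=
  hF.monotone_iterate_of_le_map (Set.empty_subset _)

theorem iterate_empty_eq_of_le (hf : F^[f + 1] ∅ = F^[f] ∅) {j : ℕ} (hj : f ≤ j) :
    F^[j] (∅ : Set α) = F^[f] ∅ := by
  obtain ⟨k, rfl⟩ := Nat.exists_eq_add_of_le hj
  rw [add_comm, Function.iterate_add_apply]
  exact Function.IsFixedPt.iterate ((Function.iterate_succ_apply' F f ∅).symm.trans hf) k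

theorem iterate_empty_succ_subset_iff (hF : Monotone F) (hf : F^[f + 1] ∅ = F^[f] ∅)
    (hfmin : ∀ j : ℕ, F^[j + 1] ∅ = F^[j] ∅ → f ≤ j) {j : ℕ} :
    F^[j + 1] (∅ : Set α) ⊆ F^[j] ∅ ↔ f ≤ j := by
  refine ⟨fun h => hfmin j (h.antisymm (iterate_empty_mono hF j.le_succ)), fun hj => ?_⟩
  rw [iterate_empty_eq_of_le hf hj, iterate_empty_eq_of_le hf (hj.trans j.le_succ)]

theorem stage_of_mem (ha : a ∈ F^[f] ∅) : stage F f a = sInf {l : ℕ | a ∈ F^[l] ∅} :=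
  if_pos ha

theorem stage_of_not_mem (ha : a ∉ F^[f] ∅) : stage F f a = f + 1 :=
  if_neg ha

theorem mem_iterate_stage (ha : a ∈ F^[f] ∅) : a ∈ F^[stage F f a] ∅ := by
  rw [stage_of_mem ha]
  exact Nat.sInf_mem (s := {l : ℕ | a ∈ F^[l] ∅}) ⟨f, ha⟩

variable (F f a) in
theorem stage_le_succ : stage F f a ≤ f + 1 := by
  by_cases ha : a ∈ F^[f] ∅
  · rw [stage_of_mem ha]
    exact (Nat.sInf_le ha).trans f.le_succ
  · rw [stage_of_not_mem ha]

variable (F f a) in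
theorem stage_ne_zero : stage F f a ≠ 0 := by
  by_cases ha : a ∈ F^[f] ∅
  · intro h0
    simpa [h0] using mem_iterate_stage ha
  · rw [stage_of_not_mem ha]
    exact f.succ_ne_zero

theorem mem_iterate_empty_iff (hF : Monotone F) (hf : F^[f + 1] ∅ = F^[f] ∅) {m : ℕ} :
    a ∈ F^[m] ∅ ↔ stage F f a ≤ m ∧ stage F f a ≤ f := by
  constructor
  · intro ha
    have hfix : a ∈ F^[f] ∅ := by
      rcases le_total m f with hm | hm
      · exact iterate_empty_mono hF hm ha
      · rwa [iterate_empty_eq_of_le hf hm] at ha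
    rw [stage_of_mem hfix]
    exact ⟨Nat.sInf_le ha, Nat.sInf_le hfix⟩
  · rintro ⟨ham, haf⟩
    have hfix : a ∈ F^[f] ∅ := by
      by_contra h
      rw [stage_of_not_mem h] at haf
      omega
    exact iterate_empty_mono hF ham (mem_iterate_stage hfix)

theorem setOf_stage_le_and_le (hF : Monotone F) (hf : F^[f + 1] ∅ = F^[f] ∅) (m : ℕ) :
    {c : α | stage F f c ≤ m ∧ stage F f c ≤ f} = F^[m] ∅ :=
  Set.ext fun _ => (mem_iterate_empty_iff hF hf).symm

theorem image_setOf_stage_lt (hF : Monotone F) (hf : F^[f + 1] ∅ = F^[f] ∅) :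
    F {c : α | stage F f c < stage F f a} = F^[stage F f a] ∅ := by
  obtain ⟨n, hn⟩ := Nat.exists_eq_succ_of_ne_zero (stage_ne_zero F f a)
  have hnf : n ≤ f := by have := stage_le_succ F f a; omega
  have hlt : {c : α | stage F f c < stage F f a} = F^[n] ∅ := by
    rw [← setOf_stage_le_and_le hF hf, hn]
    ext c
    simp only [Set.mem_ofPred_eq]
    omega
  rw [hlt, hn, Function.iterate_succ_apply']

end Stage

theorem imm_before_axiom_correct_general
    {α : Type*} (F : Set α → Set α) (hF : Monotone F)
    (f : ℕ) (hf : F^[f + 1] ∅ = F^[f] ∅)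
    (hfmin : ∀ j : ℕ, F^[j + 1] ∅ = F^[j] ∅ → f ≤ j) :
    ∀ a b : α,
      stage F f b = stage F f a + 1 ↔
        a ∈ F {c : α | stage F f c < stage F f a} ∧
        b ∉ F {c : α | stage F f c < stage F f a} ∧
        (b ∈ F {c : α | stage F f c ≤ stage F f a ∧ stage F f c ≤ f} ∨
          ∀ c : α,
            c ∈ F {c' : α | stage F f c' ≤ stage F f a ∧ stage F f c' ≤ f} →
            c ∈ F {c' : α | stage F f c' < stage F f a}) := by
  intro a b
  rw [Stage.image_setOf_stage_lt hF hf, Stage.setOf_stage_le_and_le hF hf,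
    ← Function.iterate_succ_apply' F (stage F f a) ∅, ← Set.subset_def,
    Stage.iterate_empty_succ_subset_iff hF hf hfmin]
  simp only [Stage.mem_iterate_empty_iff hF hf]
  have := Stage.stage_le_succ F f b
  omega

theorem imm_before_axiom_correct
    {α : Type*} [Fintype α] (F : Set α → Set α) (hF : Monotone F)
    (f : ℕ) (hf : F^[f + 1] ∅ = F^[f] ∅)
    (hfmin : ∀ j : ℕ, F^[j + 1] ∅ = F^[j] ∅ → f ≤ j) :
    ∀ a b : α,
      stage F f b = stage F f a + 1 ↔
        a ∈ F {c : α | stage F f c < stage F f a} ∧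
        b ∉ F {c : α | stage F f c < stage F f a} ∧
        (b ∈ F {c : α | stage F f c ≤ stage F f a ∧ stage F f c ≤ f} ∨
          ∀ c : α,
            c ∈ F {c' : α | stage F f c' ≤ stage F f a ∧ stage F f c' ≤ f} →
            c ∈ F {c' : α | stage F f c' < stage F f a}) :=
  imm_before_axiom_correct_general F hF f hf hfmin
end
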